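/- arXiv:1110.2748 — 3 statements merged into one kernel-verified Lean document; each statement's English description precedes it below -/
import Mathlib

section
/- Let a1, a2, x, y, z, θ be real numbers with cosh(a1/2) ≠ 0 and cosh(a2/2) ≠ 0. Suppose cos θ = (−cosh x + sinh(a1/2)²)/cosh(a1/2)² = (−cosh y + sinh(a2/2)²)/cosh(a2/2)², cos(π − θ) = (−cosh(z/2) + sinh(a1/2)·sinh(a2/2))/(cosh(a1/2)·cosh(a2/2)), and a1 + a2 = a. Then cosh(a/2) = 2·cosh(x/2)·cosh(y/2) + cosh(z/2). -/
theorem self_intersection_closed_geodesic (a a1 a2 x y z θ : ℝ)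
    (h1 : Real.cosh (a1/2) ≠ 0) (h2 : Real.cosh (a2/2) ≠ 0)
    (hc1 : Real.cos θ = (-Real.cosh x + Real.sinh (a1/2)^2) / Real.cosh (a1/2)^2)
    (hc2 : Real.cos θ = (-Real.cosh y + Real.sinh (a2/2)^2) / Real.cosh (a2/2)^2)
    (hc3 : Real.cos (Real.pi - θ) =
      (-Real.cosh (z/2) + Real.sinh (a1/2) * Real.sinh (a2/2)) / (Real.cosh (a1/2) * Real.cosh (a2/2)))
    (ha : a1 + a2 = a) :
    Real.cosh (a/2) = 2 * Real.cosh (x/2) * Real.cosh (y/2) + Real.cosh (z/2) := by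
  have hcosθ : Real.cos θ = 1 - 2 * Real.sin (θ/2)^2 := by
    have h := Real.cos_two_mul' (θ/2)
    rw [show 2*(θ/2) = θ by ring] at h
    have := Real.sin_sq_add_cos_sq (θ/2); linarith
  have hx : Real.cosh x = 2 * Real.cosh (x/2)^2 - 1 := by
    have h := Real.cosh_two_mul (x/2)
    rw [show 2*(x/2) = x by ring] at h
    have := Real.cosh_sq (x/2); linarith
  have hy : Real.cosh y = 2 * Real.cosh (y/2)^2 - 1 := by
    have h := Real.cosh_two_mul (y/2)
    rw [show 2*(y/2) = y by ring] at h
    have := Real.cosh_sq (y/2); linarith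
  have hs1 : Real.sinh (a1/2)^2 = Real.cosh (a1/2)^2 - 1 := by
    have := Real.cosh_sq (a1/2); linarith
  have hs2 : Real.sinh (a2/2)^2 = Real.cosh (a2/2)^2 - 1 := by
    have := Real.cosh_sq (a2/2); linarith
  rw [eq_div_iff (pow_ne_zero 2 h1)] at hc1
  rw [eq_div_iff (pow_ne_zero 2 h2)] at hc2
  rw [Real.cos_pi_sub, neg_eq_iff_eq_neg, eq_comm, neg_eq_iff_eq_neg, eq_comm] at hc3
  have hc3' : -Real.cos θ * (Real.cosh (a1/2) * Real.cosh (a2/2)) =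
      -Real.cosh (z/2) + Real.sinh (a1/2) * Real.sinh (a2/2) := by
    field_simp at hc3 ⊢
    linarith [hc3]
  have px : Real.cosh (x/2)^2 = Real.cosh (a1/2)^2 * Real.sin (θ/2)^2 := by
    linear_combination (1/2)*hc1 - (Real.cosh (a1/2)^2/2)*hcosθ - (1/2)*hx + (1/2)*hs1
  have py : Real.cosh (y/2)^2 = Real.cosh (a2/2)^2 * Real.sin (θ/2)^2 := by
    linear_combination (1/2)*hc2 - (Real.cosh (a2/2)^2/2)*hcosθ - (1/2)*hy + (1/2)*hs2
  have ex : Real.cosh (x/2) = Real.cosh (a1/2) * |Real.sin (θ/2)| := by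
    have h1' := (Real.cosh_pos (x/2)).le
    have h2' : 0 ≤ Real.cosh (a1/2) * |Real.sin (θ/2)| :=
      mul_nonneg (Real.cosh_pos _).le (abs_nonneg _)
    have hsq : Real.cosh (x/2)^2 = (Real.cosh (a1/2) * |Real.sin (θ/2)|)^2 := by
      rw [mul_pow, sq_abs]; exact px
    calc Real.cosh (x/2) = Real.sqrt (Real.cosh (x/2)^2) := (Real.sqrt_sq h1').symm
      _ = Real.sqrt ((Real.cosh (a1/2) * |Real.sin (θ/2)|)^2) := by rw [hsq]
      _ = _ := Real.sqrt_sq h2'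
  have ey : Real.cosh (y/2) = Real.cosh (a2/2) * |Real.sin (θ/2)| := by
    have h1' := (Real.cosh_pos (y/2)).le
    have h2' : 0 ≤ Real.cosh (a2/2) * |Real.sin (θ/2)| :=
      mul_nonneg (Real.cosh_pos _).le (abs_nonneg _)
    have hsq : Real.cosh (y/2)^2 = (Real.cosh (a2/2) * |Real.sin (θ/2)|)^2 := by
      rw [mul_pow, sq_abs]; exact py
    calc Real.cosh (y/2) = Real.sqrt (Real.cosh (y/2)^2) := (Real.sqrt_sq h1').symm
      _ = Real.sqrt ((Real.cosh (a2/2) * |Real.sin (θ/2)|)^2) := by rw [hsq]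
      _ = _ := Real.sqrt_sq h2'
  have hadd : Real.cosh (a/2) = Real.cosh (a1/2) * Real.cosh (a2/2)
      + Real.sinh (a1/2) * Real.sinh (a2/2) := by
    rw [show a/2 = a1/2 + a2/2 by rw [← ha]; ring, Real.cosh_add]
  rw [hadd, ex, ey]
  have habs : |Real.sin (θ/2)|^2 = Real.sin (θ/2)^2 := sq_abs _
  linear_combination -hc3' - (Real.cosh (a1/2) * Real.cosh (a2/2))*hcosθ
    - 2*(Real.cosh (a1/2) * Real.cosh (a2/2))*habs
end

section
/- Let a1, a2, x, y, z, θ be real numbers with cosh(a1/2) ≠ 0 and cosh(a2/2) ≠ 0. Suppose cos θ = (−cosh x + sinh(a1/2)²)/cosh(a1/2)² = (−cosh y + sinh(a2/2)²)/cosh(a2/2)², cos(π − θ) = (cosh(z/2) + sinh(a1/2)·sinh(a2/2))/(cosh(a1/2)·cosh(a2/2)), and a = a1 + a2. Then cosh(a/2) = 2·cosh(x/2)·cosh(y/2) − cosh(z/2). -/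
theorem self_intersection_closed_geodesic_curled (a a1 a2 x y z θ : ℝ)
    (h1 : Real.cosh (a1/2) ≠ 0) (h2 : Real.cosh (a2/2) ≠ 0)
    (hc1 : Real.cos θ = (-Real.cosh x + Real.sinh (a1/2)^2) / Real.cosh (a1/2)^2)
    (hc2 : Real.cos θ = (-Real.cosh y + Real.sinh (a2/2)^2) / Real.cosh (a2/2)^2)
    (hc3 : Real.cos (Real.pi - θ) =
      (Real.cosh (z/2) + Real.sinh (a1/2) * Real.sinh (a2/2)) / (Real.cosh (a1/2) * Real.cosh (a2/2)))
    (ha : a = a1 + a2) :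
    Real.cosh (a/2) = 2 * Real.cosh (x/2) * Real.cosh (y/2) - Real.cosh (z/2) := by
  set C1 := Real.cosh (a1/2) with hC1
  set C2 := Real.cosh (a2/2) with hC2
  set S1 := Real.sinh (a1/2) with hS1
  set S2 := Real.sinh (a2/2) with hS2
  have hC1pos : 0 < C1 := Real.cosh_pos (a1/2)
  have hC2pos : 0 < C2 := Real.cosh_pos (a2/2)
  have hcos : Real.cos θ ≤ 1 := Real.cos_le_one θ
  rw [eq_div_iff (pow_ne_zero 2 h1)] at hc1
  rw [eq_div_iff (pow_ne_zero 2 h2)] at hc2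
  rw [Real.cos_pi_sub, eq_div_iff (by positivity : C1 * C2 ≠ 0)] at hc3
  have e1 : Real.cosh x = S1^2 - Real.cos θ * C1^2 := by linarith
  have e2 : Real.cosh y = S2^2 - Real.cos θ * C2^2 := by linarith
  have e3 : Real.cosh (z/2) = -Real.cos θ * (C1*C2) - S1*S2 := by linarith
  have hS1sq : S1^2 = C1^2 - 1 := by
    have := Real.cosh_sq (a1/2); rw [← hC1, ← hS1] at this; linarith
  have hS2sq : S2^2 = C2^2 - 1 := by
    have := Real.cosh_sq (a2/2); rw [← hC2, ← hS2] at this; linarith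
  have hx2 : Real.cosh x = 2 * Real.cosh (x/2)^2 - 1 := by
    have h := Real.cosh_two_mul (x/2)
    have h' := Real.sinh_sq (x/2)
    rw [show 2*(x/2) = x by ring] at h; linarith
  have hy2 : Real.cosh y = 2 * Real.cosh (y/2)^2 - 1 := by
    have h := Real.cosh_two_mul (y/2)
    have h' := Real.sinh_sq (y/2)
    rw [show 2*(y/2) = y by ring] at h; linarith
  have hxsq : Real.cosh (x/2)^2 = C1^2 * (1 - Real.cos θ) / 2 := by
    linear_combination (e1 - hx2 + hS1sq) / 2
  have hysq : Real.cosh (y/2)^2 = C2^2 * (1 - Real.cos θ) / 2 := by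
    linear_combination (e2 - hy2 + hS2sq) / 2
  have hsq : (Real.cosh (x/2) * Real.cosh (y/2))^2 = (C1 * C2 * (1 - Real.cos θ) / 2)^2 := by
    rw [mul_pow, hxsq, hysq]; ring
  have h1' : 0 ≤ Real.cosh (x/2) * Real.cosh (y/2) := by positivity
  have h2' : 0 ≤ C1 * C2 * (1 - Real.cos θ) / 2 := by
    have : 0 ≤ 1 - Real.cos θ := by linarith
    positivity
  have hprod : Real.cosh (x/2) * Real.cosh (y/2) = C1 * C2 * (1 - Real.cos θ) / 2 :=
    (sq_eq_sq₀ h1' h2').mp hsq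
  have hadd : Real.cosh (a/2) = C1 * C2 + S1 * S2 := by
    rw [ha, show (a1+a2)/2 = a1/2 + a2/2 by ring, Real.cosh_add]
  rw [hadd, e3]
  linear_combination (-2 : ℝ) * hprod
end

section
/- Let a1, a2, a3, x, y, z, θ be real numbers with a = a1 + a2 + a3, cosh(a3/2) ≠ 0. Suppose: cos θ = (−cosh x + sinh(a3/2)²)/cosh(a3/2)², exp(y/2) = exp((a1+a2)/2)·sin(θ/2), and exp(z/2) = exp((a1+a2)/2)·(sinh(a3/2) + cosh(a3/2)·cos θ), where sin(θ/2) ≥ 0 and cosh(x/2) = cosh(a3/2)·sin(θ/2). Then exp(a/2) = 2·cosh(x/2)·exp(y/2) + exp(z/2). -/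
theorem self_intersection_arc (a a1 a2 a3 x y z θ : ℝ)
    (ha : a = a1 + a2 + a3)
    (h3 : Real.cosh (a3/2) ≠ 0)
    (hc : Real.cos θ = (-Real.cosh x + Real.sinh (a3/2)^2) / Real.cosh (a3/2)^2)
    (hy : Real.exp (y/2) = Real.exp ((a1 + a2)/2) * Real.sin (θ/2))
    (hz : Real.exp (z/2) = Real.exp ((a1 + a2)/2) * (Real.sinh (a3/2) + Real.cosh (a3/2) * Real.cos θ))
    (hs : Real.sin (θ/2) ≥ 0)
    (hx : Real.cosh (x/2) = Real.cosh (a3/2) * Real.sin (θ/2)) :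
    Real.exp (a/2) = 2 * Real.cosh (x/2) * Real.exp (y/2) + Real.exp (z/2) := by
  have hcos : Real.cos θ = 1 - 2 * Real.sin (θ/2)^2 := by
    rw [show θ = 2 * (θ/2) by ring, Real.cos_two_mul']
    ring_nf
    rw [Real.sin_sq, Real.cos_sq]
    ring
  have hexp : Real.exp (a/2) = Real.exp ((a1+a2)/2) * Real.exp (a3/2) := by
    rw [← Real.exp_add, ha]; ring_nf
  have h2 : Real.exp (a3/2) = Real.cosh (a3/2) + Real.sinh (a3/2) := by
    rw [Real.cosh_eq, Real.sinh_eq]; ring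
  rw [hx, hy, hz, hexp, h2, hcos]; ring
end
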